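/- Let 0 < α < n and let r(·) ∈ P(Q_p^n) with 1 < r_− ≤ r_+ < n/α. If f ∈ L^{r(·)}(Q_p^n), then M_α^p(f)(x) < ∞ for almost every x ∈ Q_p^n. -/

import Mathlib

open MeasureTheory ENNReal

noncomputable section

variable {p : ℕ} [Fact p.Prime] {n : ℕ}

/-- The `p`-adic ball `B_γ(x) = {y : ‖y - x‖ ≤ p^γ}` in `ℚ_p^n`. -/
def pBall (x : Fin n → ℚ_[p]) (γ : ℤ) : Set (Fin n → ℚ_[p]) :=
  Metric.closedBall x ((p : ℝ) ^ γ)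

variable [MeasurableSpace (Fin n → ℚ_[p])]

/-- The `p`-adic fractional maximal function `M_α^p f` (with values in `ℝ≥0∞`). -/
def fracMax (μ : Measure (Fin n → ℚ_[p])) (α : ℝ) (f : (Fin n → ℚ_[p]) → ℝ)
    (x : Fin n → ℚ_[p]) : ℝ≥0∞ :=
  ⨆ γ : ℤ, μ (pBall x γ) ^ (α / (n : ℝ) - 1) * ∫⁻ y in pBall x γ, (‖f y‖₊ : ℝ≥0∞) ∂μ

/-- The fractional maximal function `M_{α,B*}^p f` restricted to a fixed ball `B*`. -/
def fracMaxOn (μ : Measure (Fin n → ℚ_[p])) (α : ℝ) (B : Set (Fin n → ℚ_[p]))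
    (f : (Fin n → ℚ_[p]) → ℝ) (x : Fin n → ℚ_[p]) : ℝ≥0∞ :=
  ⨆ (γ : ℤ), ⨆ (_ : pBall x γ ⊆ B),
    μ (pBall x γ) ^ (α / (n : ℝ) - 1) * ∫⁻ y in pBall x γ, (‖f y‖₊ : ℝ≥0∞) ∂μ

/-- The maximal commutator `M_{α,b}^p f`. -/
def maxComm (μ : Measure (Fin n → ℚ_[p])) (α : ℝ) (b f : (Fin n → ℚ_[p]) → ℝ)
    (x : Fin n → ℚ_[p]) : ℝ≥0∞ :=
  ⨆ γ : ℤ, μ (pBall x γ) ^ (α / (n : ℝ) - 1) *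
    ∫⁻ y in pBall x γ, (‖b x - b y‖₊ : ℝ≥0∞) * (‖f y‖₊ : ℝ≥0∞) ∂μ

/-- The nonlinear commutator `[b, M_α^p] f = b · M_α^p f - M_α^p (b f)`. -/
def nlComm (μ : Measure (Fin n → ℚ_[p])) (α : ℝ) (b f : (Fin n → ℚ_[p]) → ℝ)
    (x : Fin n → ℚ_[p]) : ℝ :=
  b x * (fracMax μ α f x).toReal - (fracMax μ α (fun y => b y * f y) x).toReal

/-- Membership in the `p`-adic Lipschitz space `Λ_β`. -/
def MemLipschitz (β : ℝ) (f : (Fin n → ℚ_[p]) → ℝ) : Prop :=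
  ∃ C : ℝ, 0 ≤ C ∧ ∀ x y, |f x - f y| ≤ C * ‖x - y‖ ^ β

/-- The `p`-adic Lipschitz norm `‖f‖_{Λ_β}`. -/
def lipNorm (β : ℝ) (f : (Fin n → ℚ_[p]) → ℝ) : ℝ :=
  sSup {r : ℝ | ∃ x y : Fin n → ℚ_[p], x ≠ y ∧ r = |f x - f y| / ‖x - y‖ ^ β}

/-- The average `b_B` of `b` over a set `B`. -/
def avg (μ : Measure (Fin n → ℚ_[p])) (B : Set (Fin n → ℚ_[p]))
    (b : (Fin n → ℚ_[p]) → ℝ) : ℝ :=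
  (μ B).toReal⁻¹ * ∫ y in B, b y ∂μ

/-- The Luxemburg norm of an `ℝ≥0∞`-valued function. -/
def luxNormE (μ : Measure (Fin n → ℚ_[p])) (q : (Fin n → ℚ_[p]) → ℝ)
    (g : (Fin n → ℚ_[p]) → ℝ≥0∞) : ℝ≥0∞ :=
  sInf {η : ℝ≥0∞ | 0 < η ∧ η < ⊤ ∧ ∫⁻ x, (g x / η) ^ q x ∂μ ≤ 1}

/-- The Luxemburg norm `‖f‖_{L^{q(·)}}` of a real-valued function. -/
def luxNorm (μ : Measure (Fin n → ℚ_[p])) (q : (Fin n → ℚ_[p]) → ℝ)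
    (f : (Fin n → ℚ_[p]) → ℝ) : ℝ≥0∞ :=
  luxNormE μ q fun x => (‖f x‖₊ : ℝ≥0∞)

/-- The class `P(ℚ_p^n)` of variable exponents: `1 < r₋ ≤ r₊ < ∞`. -/
def IsPExp (μ : Measure (Fin n → ℚ_[p])) (r : (Fin n → ℚ_[p]) → ℝ) : Prop :=
  Measurable r ∧ (∀ x, 1 ≤ r x) ∧ 1 < essInf r μ ∧ ∃ M : ℝ, ∀ᵐ x ∂μ, r x ≤ M

/-- The class `C^log(ℚ_p^n)` of globally log-Hölder continuous variable exponents. -/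
def IsLogHolder (μ : Measure (Fin n → ℚ_[p])) (r : (Fin n → ℚ_[p]) → ℝ) : Prop :=
  Measurable r ∧ (∀ x, 1 ≤ r x) ∧
    ∃ C : ℝ, 0 ≤ C ∧
      (∀ (γ : ℤ) (x : Fin n → ℚ_[p]),
        (γ : ℝ) * (essInf r (μ.restrict (pBall x γ)) - essSup r (μ.restrict (pBall x γ))) ≤ C) ∧
      ∀ x y : Fin n → ℚ_[p], |r x - r y| ≤ C / Real.logb p ((p : ℝ) + min ‖x‖ ‖y‖)

/-- The set of values whose supremum is the `lip_β^q` norm. -/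
def lipqSet (μ : Measure (Fin n → ℚ_[p])) (β q : ℝ) (f : (Fin n → ℚ_[p]) → ℝ) : Set ℝ :=
  {r : ℝ | ∃ (x : Fin n → ℚ_[p]) (γ : ℤ),
    r = (μ (pBall x γ)).toReal ^ (-(β / (n : ℝ))) *
      ((μ (pBall x γ)).toReal⁻¹ * ∫ y in pBall x γ, |f y - avg μ (pBall x γ) f| ^ q ∂μ) ^ (1 / q)}

private lemma pi_dist_ultra (x y z : Fin n → ℚ_[p]) :
    dist x z ≤ max (dist x y) (dist y z) := by
  refine (dist_pi_le_iff (le_max_of_le_left dist_nonneg)).mpr fun i => ?_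
  calc dist (x i) (z i) ≤ max (dist (x i) (y i)) (dist (y i) (z i)) := dist_triangle_max _ _ _
    _ ≤ _ := max_le_max (dist_le_pi_dist x y i) (dist_le_pi_dist y z i)

private lemma p_one_lt : (1:ℝ) < (p:ℝ) := by
  exact_mod_cast (Fact.out : p.Prime).one_lt

private lemma pBall_mono (x : Fin n → ℚ_[p]) {γ δ : ℤ} (h : γ ≤ δ) : pBall x γ ⊆ pBall x δ :=
  Metric.closedBall_subset_closedBall (zpow_le_zpow_right₀ p_one_lt.le h)

private lemma pBall_meas [BorelSpace (Fin n → ℚ_[p])] (x : Fin n → ℚ_[p]) (γ : ℤ) :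
    MeasurableSet (pBall x γ) :=
  measurableSet_closedBall

private lemma measure_pBall [BorelSpace (Fin n → ℚ_[p])] (μ : Measure (Fin n → ℚ_[p]))
    [μ.IsAddHaarMeasure] (x : Fin n → ℚ_[p]) (γ : ℤ) : μ (pBall x γ) = μ (pBall 0 γ) := by
  have h : (fun y => x + y) ⁻¹' (pBall x γ) = pBall 0 γ := by
    ext y
    simp [pBall, Metric.mem_closedBall, dist_eq_norm]
  rw [← h, measure_preimage_add]

private lemma measure_pBall_pos [BorelSpace (Fin n → ℚ_[p])] (μ : Measure (Fin n → ℚ_[p]))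
    [μ.IsAddHaarMeasure] (x : Fin n → ℚ_[p]) (γ : ℤ) : 0 < μ (pBall x γ) :=
  lt_of_lt_of_le (Metric.measure_ball_pos μ x (zpow_pos (lt_trans zero_lt_one p_one_lt) γ))
    (measure_mono Metric.ball_subset_closedBall)

private lemma measure_pBall_lt_top [BorelSpace (Fin n → ℚ_[p])] (μ : Measure (Fin n → ℚ_[p]))
    [μ.IsAddHaarMeasure] (x : Fin n → ℚ_[p]) (γ : ℤ) : μ (pBall x γ) < ⊤ :=
  (ProperSpace.isCompact_closedBall x _).measure_lt_top

private lemma measure_pBall_doubling [BorelSpace (Fin n → ℚ_[p])] (μ : Measure (Fin n → ℚ_[p]))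
    [μ.IsAddHaarMeasure] (hn : 0 < n) (γ : ℤ) :
    2 * μ (pBall (0 : Fin n → ℚ_[p]) (γ - 1)) ≤ μ (pBall 0 γ) := by
  set i0 : Fin n := ⟨0, hn⟩
  set c : Fin n → ℚ_[p] := fun j => if j = i0 then (p:ℚ_[p])^(-γ) else 0 with hc
  have hpow : (0:ℝ) < (p:ℝ)^(γ-1) := zpow_pos (lt_trans zero_lt_one p_one_lt) _
  have hlt : ((p:ℝ))^(γ-1) < (p:ℝ)^γ := zpow_lt_zpow_right₀ p_one_lt (by omega)
  have hc0 : dist c 0 = (p:ℝ)^γ := by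
    apply le_antisymm
    · refine (dist_pi_le_iff (by positivity)).mpr fun i => ?_
      by_cases hi : i = i0
      · simp [hc, hi, dist_eq_norm, Padic.norm_p_zpow]
      · simp only [hc, hi, if_false]
        simpa using (le_of_lt (zpow_pos (lt_trans zero_lt_one (p_one_lt (p:=p))) γ))
    · calc ((p:ℝ))^γ = ‖(p:ℚ_[p])^(-γ)‖ := by rw [Padic.norm_p_zpow]; simp
        _ = dist (c i0) ((0 : Fin n → ℚ_[p]) i0) := by simp [hc, dist_eq_norm]
        _ ≤ dist c 0 := dist_le_pi_dist c 0 i0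
  have hsub : pBall c (γ-1) ∪ pBall 0 (γ-1) ⊆ pBall (0 : Fin n → ℚ_[p]) γ := by
    rintro z (hz | hz)
    · have h1 : dist z 0 ≤ max (dist z c) (dist c 0) := pi_dist_ultra z c 0
      have h2 : dist z c ≤ (p:ℝ)^(γ-1) := hz
      simp only [pBall, Metric.mem_closedBall]
      calc dist z 0 ≤ max (dist z c) (dist c 0) := h1
        _ ≤ (p:ℝ)^γ := max_le (h2.trans hlt.le) hc0.le
    · exact pBall_mono 0 (by omega) hz
  have hdisj : Disjoint (pBall c (γ-1)) (pBall (0 : Fin n → ℚ_[p]) (γ-1)) := by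
    rw [Set.disjoint_left]
    intro z hzc hz0
    have hmax : dist c 0 ≤ max (dist c z) (dist z 0) := pi_dist_ultra c z 0
    rw [hc0] at hmax
    have hcz : dist c z ≤ (p:ℝ)^(γ-1) := by rw [dist_comm]; exact hzc
    have hz0' : dist z 0 ≤ (p:ℝ)^(γ-1) := hz0
    have h2 := hmax.trans (max_le hcz hz0')
    exact absurd h2 (not_le.mpr hlt)
  calc 2 * μ (pBall (0 : Fin n → ℚ_[p]) (γ-1))
      = μ (pBall c (γ-1)) + μ (pBall 0 (γ-1)) := by
        rw [measure_pBall μ c]; ring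
    _ = μ (pBall c (γ-1) ∪ pBall 0 (γ-1)) := (measure_union hdisj (pBall_meas 0 _)).symm
    _ ≤ μ (pBall 0 γ) := measure_mono hsub

theorem fracMax_finite_ae
    (hn : 0 < n) [BorelSpace (Fin n → ℚ_[p])]
    (μ : Measure (Fin n → ℚ_[p])) [μ.IsAddHaarMeasure]
    (hμ : μ (Metric.closedBall 0 1) = 1)
    (α : ℝ) (hα0 : 0 < α) (hαn : α < n)
    (r : (Fin n → ℚ_[p]) → ℝ) (hrP : IsPExp μ r) (hrplus : essSup r μ < (n : ℝ) / α)
    (f : (Fin n → ℚ_[p]) → ℝ) (hf : Measurable f) (hfr : luxNorm μ r f < ⊤) :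
    ∀ᵐ x ∂μ, fracMax μ α f x < ⊤ := by
  classical
  obtain ⟨hrMeas, hr1, hrInf, M, hM⟩ := hrP
  have hn' : (0:ℝ) < (n:ℝ) := by exact_mod_cast hn
  -- the essential supremum `t` of the exponent
  set t := essSup r μ with ht
  have hne : μ ≠ 0 := by
    intro h0; rw [h0] at hμ; simp at hμ
  have hNB : (ae μ).NeBot := ae_neBot.mpr hne
  have hbdd : Filter.IsBoundedUnder (· ≤ ·) (ae μ) r := ⟨M, by simpa using hM⟩
  have hbdd' : Filter.IsBoundedUnder (· ≥ ·) (ae μ) r :=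
    ⟨1, by simpa using Filter.Eventually.of_forall hr1⟩
  have h1t : 1 < t := lt_of_lt_of_le hrInf (Filter.liminf_le_limsup hbdd hbdd')
  have ht0 : (0:ℝ) < t := lt_trans one_pos h1t
  have hrt : ∀ᵐ y ∂μ, r y ≤ t := _root_.ae_le_essSup hbdd
  -- exponent arithmetic
  have hαn0 : 0 < α/(n:ℝ) := div_pos hα0 hn'
  have hαn1 : α/(n:ℝ) < 1 := (div_lt_one hn').mpr hαn
  have he0 : α/(n:ℝ) - 1 ≤ 0 := by linarith
  have hαt : α/(n:ℝ) < 1/t := by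
    rw [div_lt_div_iff₀ hn' ht0]
    have h1 := (lt_div_iff₀ hα0).mp hrplus
    nlinarith
  -- extract a Luxemburg "norm bound" η
  have hSet : {η : ℝ≥0∞ | 0 < η ∧ η < ⊤ ∧
      ∫⁻ x, ((‖f x‖₊ : ℝ≥0∞) / η) ^ r x ∂μ ≤ 1}.Nonempty := by
    by_contra hcon
    rw [Set.not_nonempty_iff_eq_empty] at hcon
    rw [luxNorm, luxNormE, hcon, sInf_empty] at hfr
    exact lt_irrefl _ hfr
  obtain ⟨η, hη0, hηtop, hηint⟩ := hSet
  set F : (Fin n → ℚ_[p]) → ℝ≥0∞ := fun y => (‖f y‖₊ : ℝ≥0∞) with hFdef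
  have hFmeas : Measurable F := hf.nnnorm.coe_nnreal_ennreal
  set φ : (Fin n → ℚ_[p]) → ℝ≥0∞ := fun y => (F y / η) ^ r y with hφdef
  have hφmeas : Measurable φ := (hFmeas.div measurable_const).pow hrMeas
  have hφint : ∫⁻ y, φ y ∂μ ≤ 1 := hηint
  set S : Set (Fin n → ℚ_[p]) := {y | η < F y} with hSdef
  have hSmeas : MeasurableSet S := measurableSet_lt measurable_const hFmeas
  set G : (Fin n → ℚ_[p]) → ℝ≥0∞ := S.indicator F with hGdef
  set h : (Fin n → ℚ_[p]) → ℝ≥0∞ := Sᶜ.indicator F with hhdef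
  have hGmeas : Measurable G := hFmeas.indicator hSmeas
  have hhmeas : Measurable h := hFmeas.indicator hSmeas.compl
  have hsplit : ∀ y, F y = h y + G y := by
    intro y; by_cases hy : y ∈ S
    · rw [hGdef, hhdef, Set.indicator_of_mem hy, Set.indicator_of_notMem (by simpa using hy),
        zero_add]
    · rw [hGdef, hhdef, Set.indicator_of_notMem hy, Set.indicator_of_mem (by simpa using hy),
        add_zero]
  -- pointwise estimates on the two parts
  have hG_le : ∀ y, G y ≤ η * φ y := by
    intro y
    by_cases hy : y ∈ S
    · have h1 : (1:ℝ≥0∞) ≤ F y / η :=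
        (ENNReal.le_div_iff_mul_le (Or.inl hη0.ne') (Or.inl hηtop.ne)).mpr
          (by simpa using (le_of_lt hy))
      have h2 : F y / η ≤ φ y := by
        calc F y / η = (F y / η) ^ (1:ℝ) := (ENNReal.rpow_one _).symm
          _ ≤ (F y / η) ^ (r y) := ENNReal.rpow_le_rpow_of_exponent_le h1 (hr1 y)
      calc G y = F y := Set.indicator_of_mem hy F
        _ = η * (F y / η) := (ENNReal.mul_div_cancel hη0.ne' hηtop.ne).symm
        _ ≤ η * φ y := mul_le_mul_right h2 _
    · simp [hGdef, Set.indicator_of_notMem hy]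
  have hG_int : ∫⁻ y, G y ∂μ ≤ η := by
    calc ∫⁻ y, G y ∂μ ≤ ∫⁻ y, η * φ y ∂μ := lintegral_mono hG_le
      _ = η * ∫⁻ y, φ y ∂μ := lintegral_const_mul η hφmeas
      _ ≤ η * 1 := mul_le_mul_right hφint _
      _ = η := mul_one _
  have hh_le_η : ∀ y, h y ≤ η := by
    intro y
    by_cases hy : y ∈ S
    · rw [hhdef, Set.indicator_of_notMem (by simpa using hy)]; exact zero_le
    · rw [hhdef, Set.indicator_of_mem (by simpa using hy)]
      exact not_lt.mp hy
  have hh_le : ∀ᵐ y ∂μ, h y ≤ η * φ y ^ (1/t) := by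
    filter_upwards [hrt] with y hyt
    by_cases hy : y ∈ S
    · rw [hhdef, Set.indicator_of_notMem (by simpa using hy)]; exact zero_le
    · have hFη : F y ≤ η := not_lt.mp hy
      have hb1 : F y / η ≤ 1 := ENNReal.div_le_of_le_mul (by simpa using hFη)
      have hexp : r y * (1/t) ≤ 1 := by
        rw [mul_one_div]; exact (div_le_one ht0).mpr hyt
      have hrpow : F y / η ≤ (φ y) ^ (1/t) := by
        have h1 : (φ y) ^ (1/t) = (F y / η) ^ (r y * (1/t)) := by
          rw [hφdef]; exact (ENNReal.rpow_mul _ _ _).symm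
        rw [h1]
        calc F y / η = (F y / η) ^ (1:ℝ) := (ENNReal.rpow_one _).symm
          _ ≤ (F y / η) ^ (r y * (1/t)) := ENNReal.rpow_le_rpow_of_exponent_ge hb1 hexp
      calc h y ≤ F y := Set.indicator_le_self _ _ y
        _ = η * (F y / η) := (ENNReal.mul_div_cancel hη0.ne' hηtop.ne).symm
        _ ≤ η * φ y ^ (1/t) := mul_le_mul_right hrpow _
  -- the measure of p-adic balls
  set m : ℤ → ℝ≥0∞ := fun γ => μ (pBall (0 : Fin n → ℚ_[p]) γ) with hmdef
  have hm_eq : ∀ (x : Fin n → ℚ_[p]) (γ : ℤ), μ (pBall x γ) = m γ := fun x γ =>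
    measure_pBall μ x γ
  have hm0 : m 0 = 1 := by
    rw [hmdef]
    simp only
    rw [show pBall (0 : Fin n → ℚ_[p]) 0 = Metric.closedBall 0 1 by simp [pBall], hμ]
  have hm_ne0 : ∀ γ : ℤ, m γ ≠ 0 := fun γ => (measure_pBall_pos μ 0 γ).ne'
  have hm_netop : ∀ γ : ℤ, m γ ≠ ⊤ := fun γ => (measure_pBall_lt_top μ 0 γ).ne
  have hm_le_one : ∀ γ : ℤ, γ ≤ 0 → m γ ≤ 1 := fun γ hγ =>
    hm0 ▸ measure_mono (pBall_mono 0 hγ)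
  have hm_ge_one : ∀ γ : ℤ, 0 ≤ γ → 1 ≤ m γ := fun γ hγ =>
    hm0 ▸ measure_mono (pBall_mono 0 hγ)
  have hm_dec : ∀ k : ℕ, m (-(k:ℤ)) ≤ 2⁻¹ ^ k := by
    intro k
    induction k with
    | zero => simpa using hm0.le
    | succ k ih =>
      have hd := measure_pBall_doubling μ hn (-(k:ℤ))
      have hstep : m (-((k+1:ℕ):ℤ)) ≤ 2⁻¹ * m (-(k:ℤ)) := by
        have h2 : (2:ℝ≥0∞)⁻¹ * (2 * m (-(k:ℤ) - 1)) ≤ 2⁻¹ * m (-(k:ℤ)) :=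
          mul_le_mul_right hd _
        rw [← mul_assoc, ENNReal.inv_mul_cancel two_ne_zero ENNReal.ofNat_ne_top, one_mul] at h2
        rw [show (-((k+1:ℕ):ℤ)) = -(k:ℤ) - 1 by push_cast; ring]
        exact h2
      calc m (-((k+1:ℕ):ℤ)) ≤ 2⁻¹ * m (-(k:ℤ)) := hstep
        _ ≤ 2⁻¹ * 2⁻¹ ^ k := mul_le_mul_right ih _
        _ = 2⁻¹ ^ (k+1) := (pow_succ' _ _).symm
  have hrpow_combine : ∀ γ : ℤ, m γ ^ (α/(n:ℝ) - 1) * m γ = m γ ^ (α/(n:ℝ)) := by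
    intro γ
    have h1 : m γ ^ (α/(n:ℝ) - 1) * m γ = m γ ^ (α/(n:ℝ) - 1) * m γ ^ (1:ℝ) := by
      rw [ENNReal.rpow_one]
    rw [h1, ← ENNReal.rpow_add _ _ (hm_ne0 γ) (hm_netop γ)]
    congr 1; ring
  -- the kernel representation and Tonelli computation
  have hrepr : ∀ (γ : ℤ) (x : Fin n → ℚ_[p]), ∫⁻ y in pBall x γ, G y ∂μ
      = ∫⁻ y, G y * (pBall (0 : Fin n → ℚ_[p]) γ).indicator 1 (y - x) ∂μ := by
    intro γ x
    rw [← lintegral_indicator (pBall_meas x γ) G]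
    congr 1; funext y
    by_cases hy : y ∈ pBall x γ
    · have hyx : y - x ∈ pBall (0 : Fin n → ℚ_[p]) γ := by
        simpa [pBall, Metric.mem_closedBall, dist_eq_norm] using hy
      rw [Set.indicator_of_mem hy, Set.indicator_of_mem hyx]
      simp
    · have hyx : y - x ∉ pBall (0 : Fin n → ℚ_[p]) γ := by
        simp only [pBall, Metric.mem_closedBall, dist_eq_norm] at hy ⊢
        simpa using hy
      rw [Set.indicator_of_notMem hy, Set.indicator_of_notMem hyx]
      simp
  have hWmeas : ∀ γ : ℤ, Measurable (Function.uncurry fun (x y : Fin n → ℚ_[p]) =>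
      G y * (pBall (0 : Fin n → ℚ_[p]) γ).indicator 1 (y - x)) := by
    intro γ
    exact (hGmeas.comp measurable_snd).mul
      ((measurable_const.indicator (pBall_meas 0 γ)).comp (measurable_snd.sub measurable_fst))
  have hKmeas : ∀ γ : ℤ, Measurable fun x => ∫⁻ y in pBall x γ, G y ∂μ := by
    intro γ
    have : (fun x => ∫⁻ y in pBall x γ, G y ∂μ)
        = fun x => ∫⁻ y, G y * (pBall (0 : Fin n → ℚ_[p]) γ).indicator 1 (y - x) ∂μ :=
      funext fun x => hrepr γ x
    rw [this]
    exact (hWmeas γ).lintegral_prod_right'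
  have hKint : ∀ γ : ℤ, ∫⁻ x, (∫⁻ y in pBall x γ, G y ∂μ) ∂μ = m γ * ∫⁻ y, G y ∂μ := by
    intro γ
    calc ∫⁻ x, (∫⁻ y in pBall x γ, G y ∂μ) ∂μ
        = ∫⁻ x, ∫⁻ y, G y * (pBall (0 : Fin n → ℚ_[p]) γ).indicator 1 (y - x) ∂μ ∂μ := by
          exact lintegral_congr fun x => hrepr γ x
      _ = ∫⁻ y, ∫⁻ x, G y * (pBall (0 : Fin n → ℚ_[p]) γ).indicator 1 (y - x) ∂μ ∂μ :=
          lintegral_lintegral_swap (hWmeas γ).aemeasurable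
      _ = ∫⁻ y, G y * m γ ∂μ := by
          refine lintegral_congr fun y => ?_
          have hind : Measurable fun x : Fin n → ℚ_[p] =>
              (pBall (0 : Fin n → ℚ_[p]) γ).indicator (1 : (Fin n → ℚ_[p]) → ℝ≥0∞) (y - x) :=
            (measurable_const.indicator (pBall_meas 0 γ)).comp (measurable_const.sub measurable_id)
          rw [lintegral_const_mul _ hind]
          congr 1
          have hset : (fun x => (pBall (0 : Fin n → ℚ_[p]) γ).indicator
              (1 : (Fin n → ℚ_[p]) → ℝ≥0∞) (y - x)) = (pBall y γ).indicator 1 := by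
            funext x
            by_cases hx : x ∈ pBall y γ
            · have : y - x ∈ pBall (0 : Fin n → ℚ_[p]) γ := by
                simp only [pBall, Metric.mem_closedBall, dist_eq_norm] at hx ⊢
                rw [sub_zero, norm_sub_rev]
                exact hx
              rw [Set.indicator_of_mem this, Set.indicator_of_mem hx]
              rfl
            · have : y - x ∉ pBall (0 : Fin n → ℚ_[p]) γ := by
                simp only [pBall, Metric.mem_closedBall, dist_eq_norm] at hx ⊢
                rw [sub_zero, norm_sub_rev]
                exact hx
              rw [Set.indicator_of_notMem this, Set.indicator_of_notMem hx]
          rw [hset, lintegral_indicator (pBall_meas y γ)]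
          simpa using (hm_eq y γ)
      _ = m γ * ∫⁻ y, G y ∂μ := by rw [lintegral_mul_const _ hGmeas, mul_comm]
  -- the dominating series Ψ
  set c : ℝ≥0∞ := 2⁻¹ ^ (α/(n:ℝ)) with hcdef
  have hc1 : c < 1 := ENNReal.rpow_lt_one (by norm_num) hαn0
  set Ψ : (Fin n → ℚ_[p]) → ℝ≥0∞ :=
    fun x => ∑' k : ℕ, m (-(k:ℤ)) ^ (α/(n:ℝ) - 1) * ∫⁻ y in pBall x (-(k:ℤ)), G y ∂μ with hΨdef
  have hΨmeas : Measurable Ψ :=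
    Measurable.ennreal_tsum fun k => (hKmeas _).const_mul _
  have hΨint : ∫⁻ x, Ψ x ∂μ ≤ (1 - c)⁻¹ * η := by
    rw [hΨdef]
    simp only
    rw [lintegral_tsum fun k => ((hKmeas _).const_mul _).aemeasurable]
    calc ∑' k : ℕ, ∫⁻ x, m (-(k:ℤ)) ^ (α/(n:ℝ) - 1) * ∫⁻ y in pBall x (-(k:ℤ)), G y ∂μ ∂μ
        = ∑' k : ℕ, m (-(k:ℤ)) ^ (α/(n:ℝ) - 1) * (m (-(k:ℤ)) * ∫⁻ y, G y ∂μ) := by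
          refine tsum_congr fun k => ?_
          rw [lintegral_const_mul _ (hKmeas _), hKint]
      _ ≤ ∑' k : ℕ, c ^ k * η := by
          refine ENNReal.tsum_le_tsum fun k => ?_
          rw [← mul_assoc, hrpow_combine]
          refine mul_le_mul' ?_ hG_int
          calc m (-(k:ℤ)) ^ (α/(n:ℝ)) ≤ ((2:ℝ≥0∞)⁻¹ ^ k) ^ (α/(n:ℝ)) :=
              ENNReal.rpow_le_rpow (hm_dec k) hαn0.le
            _ = c ^ k := by
              rw [← ENNReal.rpow_natCast (2⁻¹:ℝ≥0∞) k, ← ENNReal.rpow_mul, mul_comm,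
                ENNReal.rpow_mul, ENNReal.rpow_natCast]
      _ = (∑' k : ℕ, c ^ k) * η := ENNReal.tsum_mul_right
      _ = (1 - c)⁻¹ * η := by rw [ENNReal.tsum_geometric]
  have hΨae : ∀ᵐ x ∂μ, Ψ x < ⊤ := by
    refine ae_lt_top hΨmeas (ne_of_lt (lt_of_le_of_lt hΨint ?_))
    exact ENNReal.mul_lt_top (ENNReal.inv_lt_top.mpr (tsub_pos_of_lt hc1)) hηtop
  -- conclusion
  filter_upwards [hΨae] with x hx
  have hfm : fracMax μ α f x
      = ⨆ γ : ℤ, μ (pBall x γ) ^ (α/(n:ℝ) - 1) * ∫⁻ y in pBall x γ, F y ∂μ := rfl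
  have hbound : fracMax μ α f x ≤ η + (η + Ψ x) := by
    rw [hfm]
    refine iSup_le fun γ => ?_
    rw [hm_eq x γ]
    have hFsplit : ∫⁻ y in pBall x γ, F y ∂μ
        = (∫⁻ y in pBall x γ, h y ∂μ) + ∫⁻ y in pBall x γ, G y ∂μ := by
      rw [← lintegral_add_left hhmeas]
      exact lintegral_congr fun y => hsplit y
    have hhpart : m γ ^ (α/(n:ℝ) - 1) * ∫⁻ y in pBall x γ, h y ∂μ ≤ η := by
      rcases le_or_gt γ 0 with hγ | hγ
      · have h2 : ∫⁻ y in pBall x γ, h y ∂μ ≤ η * m γ := by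
          calc ∫⁻ y in pBall x γ, h y ∂μ ≤ ∫⁻ _ in pBall x γ, η ∂μ :=
              lintegral_mono fun y => hh_le_η y
            _ = η * μ (pBall x γ) := setLIntegral_const _ _
            _ = η * m γ := by rw [hm_eq]
        calc m γ ^ (α/(n:ℝ) - 1) * ∫⁻ y in pBall x γ, h y ∂μ
            ≤ m γ ^ (α/(n:ℝ) - 1) * (η * m γ) := mul_le_mul_right h2 _
          _ = η * (m γ ^ (α/(n:ℝ) - 1) * m γ) := by ring
          _ = η * m γ ^ (α/(n:ℝ)) := by rw [hrpow_combine γ]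
          _ ≤ η * 1 := mul_le_mul_right (ENNReal.rpow_le_one (hm_le_one γ hγ) hαn0.le) _
          _ = η := mul_one _
      · -- Hölder with exponents t, t/(t-1)
        have hconj : t.HolderConjugate (t/(t-1)) := Real.HolderConjugate.conjExponent h1t
        have hconj' : 1/(t/(t-1)) = 1 - 1/t := by
          have := hconj.inv_add_inv_eq_one
          rw [one_div, one_div]; linarith
        have hHolder : ∫⁻ y in pBall x γ, φ y ^ (1/t) ∂μ
            ≤ (∫⁻ y in pBall x γ, φ y ∂μ) ^ (1/t) * m γ ^ (1 - 1/t) := by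
          have hH := ENNReal.lintegral_mul_le_Lp_mul_Lq (μ.restrict (pBall x γ)) hconj
            ((hφmeas.pow measurable_const).aemeasurable) aemeasurable_const
            (f := fun y => φ y ^ (1/t)) (g := fun _ => (1:ℝ≥0∞))
          simp only [Pi.mul_apply, mul_one, ENNReal.one_rpow] at hH
          calc ∫⁻ y in pBall x γ, φ y ^ (1/t) ∂μ
              ≤ (∫⁻ y in pBall x γ, (φ y ^ (1/t)) ^ t ∂μ) ^ (1/t)
                * (∫⁻ _ in pBall x γ, (1:ℝ≥0∞) ∂μ) ^ (1/(t/(t-1))) := hH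
            _ = (∫⁻ y in pBall x γ, φ y ∂μ) ^ (1/t) * m γ ^ (1 - 1/t) := by
                congr 1
                · congr 1
                  refine lintegral_congr fun y => ?_
                  rw [← ENNReal.rpow_mul, one_div_mul_cancel ht0.ne', ENNReal.rpow_one]
                · rw [setLIntegral_one, hm_eq, hconj']
        have h3 : ∫⁻ y in pBall x γ, h y ∂μ ≤ η * m γ ^ (1 - 1/t) := by
          calc ∫⁻ y in pBall x γ, h y ∂μ
              ≤ ∫⁻ y in pBall x γ, η * φ y ^ (1/t) ∂μ :=
                lintegral_mono_ae (ae_restrict_of_ae hh_le)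
            _ = η * ∫⁻ y in pBall x γ, φ y ^ (1/t) ∂μ :=
                lintegral_const_mul η (hφmeas.pow measurable_const)
            _ ≤ η * ((∫⁻ y in pBall x γ, φ y ∂μ) ^ (1/t) * m γ ^ (1 - 1/t)) :=
                mul_le_mul_right hHolder _
            _ ≤ η * ((1:ℝ≥0∞) ^ (1/t) * m γ ^ (1 - 1/t)) := by
                refine mul_le_mul_right (mul_le_mul' ?_ le_rfl) _
                refine ENNReal.rpow_le_rpow ?_ (by positivity)
                exact (lintegral_mono' Measure.restrict_le_self le_rfl).trans hφint
            _ = η * m γ ^ (1 - 1/t) := by rw [ENNReal.one_rpow, one_mul]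
        calc m γ ^ (α/(n:ℝ) - 1) * ∫⁻ y in pBall x γ, h y ∂μ
            ≤ m γ ^ (α/(n:ℝ) - 1) * (η * m γ ^ (1 - 1/t)) := mul_le_mul_right h3 _
          _ = η * (m γ ^ (α/(n:ℝ) - 1) * m γ ^ (1 - 1/t)) := by ring
          _ = η * m γ ^ ((α/(n:ℝ) - 1) + (1 - 1/t)) := by
              rw [← ENNReal.rpow_add _ _ (hm_ne0 γ) (hm_netop γ)]
          _ ≤ η * 1 := by
              refine mul_le_mul_right ?_ _
              have hle : m γ ^ ((α/(n:ℝ) - 1) + (1 - 1/t)) ≤ m γ ^ (0:ℝ) :=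
                ENNReal.rpow_le_rpow_of_exponent_le (hm_ge_one γ hγ.le) (by linarith)
              simpa using hle
          _ = η := mul_one _
    have hGpart : m γ ^ (α/(n:ℝ) - 1) * ∫⁻ y in pBall x γ, G y ∂μ ≤ η + Ψ x := by
      rcases le_or_gt γ 0 with hγ | hγ
      · obtain ⟨k, hk⟩ : ∃ k : ℕ, γ = -(k:ℤ) := ⟨γ.natAbs, by omega⟩
        subst hk
        exact le_add_left (ENNReal.le_tsum k)
      · have h4 : ∫⁻ y in pBall x γ, G y ∂μ ≤ η :=
          (lintegral_mono' Measure.restrict_le_self le_rfl).trans hG_int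
        have h5 : m γ ^ (α/(n:ℝ) - 1) ≤ 1 := by
          have hle : m γ ^ (α/(n:ℝ) - 1) ≤ m γ ^ (0:ℝ) :=
            ENNReal.rpow_le_rpow_of_exponent_le (hm_ge_one γ hγ.le) he0
          simpa using hle
        calc m γ ^ (α/(n:ℝ) - 1) * ∫⁻ y in pBall x γ, G y ∂μ ≤ 1 * η := mul_le_mul' h5 h4
          _ = η := one_mul η
          _ ≤ η + Ψ x := le_self_add
    calc m γ ^ (α/(n:ℝ) - 1) * ∫⁻ y in pBall x γ, F y ∂μ
        = m γ ^ (α/(n:ℝ) - 1) * ((∫⁻ y in pBall x γ, h y ∂μ) + ∫⁻ y in pBall x γ, G y ∂μ) := by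
          rw [hFsplit]
      _ = m γ ^ (α/(n:ℝ) - 1) * ∫⁻ y in pBall x γ, h y ∂μ
          + m γ ^ (α/(n:ℝ) - 1) * ∫⁻ y in pBall x γ, G y ∂μ := mul_add _ _ _
      _ ≤ η + (η + Ψ x) := add_le_add hhpart hGpart
  exact lt_of_le_of_lt hbound
    (ENNReal.add_lt_top.mpr ⟨hηtop, ENNReal.add_lt_top.mpr ⟨hηtop, hx⟩⟩)


end
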